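/- arXiv:2504.14394 — 7 statements merged into one kernel-verified Lean document; each statement's English description precedes it below -/
import Mathlib

section
/- For A, B ∈ ℂ^{m×m}, if the scaled graph of A and the inverse scaled graph of B are disjoint, i.e. SG(A) ∩ SG†(B) = ∅, then det(I − AB) ≠ 0. -/
open Matrix Complex

/-- Euclidean norm of a complex vector. -/
noncomputable def enorm' {m : ℕ} (x : Fin m → ℂ) : ℝ :=
  Real.sqrt (∑ i, Complex.normSq (x i))

/-- Real inner product Re(x* y). -/
noncomputable def rinner {m : ℕ} (x y : Fin m → ℂ) : ℝ :=
  (∑ i, (starRingEnd ℂ) (x i) * y i).re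

/-- The gain γ(x, y) = ‖y‖₂ / ‖x‖₂. -/
noncomputable def gain {m : ℕ} (x y : Fin m → ℂ) : ℝ := enorm' y / enorm' x

/-- The phase θ(x, y) = arccos(Re(x* y)/(‖x‖₂‖y‖₂)) ∈ [0, π]. -/
noncomputable def phase {m : ℕ} (x y : Fin m → ℂ) : ℝ :=
  Real.arccos (rinner x y / (enorm' x * enorm' y))

/-- The point γ(x,y)·e^{iθ(x,y)}. -/
noncomputable def sgPoint {m : ℕ} (x y : Fin m → ℂ) : ℂ :=
  (gain x y : ℂ) * Complex.exp (Complex.I * (phase x y : ℂ))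

/-- The scaled graph SG(A). -/
noncomputable def SG {m : ℕ} (A : Matrix (Fin m) (Fin m) ℂ) : Set ℂ :=
  {z | ∃ x : Fin m → ℂ, x ≠ 0 ∧ A.mulVec x ≠ 0 ∧
      (z = sgPoint x (A.mulVec x) ∨ z = (starRingEnd ℂ) (sgPoint x (A.mulVec x)))}

/-- The inverse scaled graph SG†(B). -/
noncomputable def SGdag {m : ℕ} (B : Matrix (Fin m) (Fin m) ℂ) : Set ℂ :=
  {z | ∃ x : Fin m → ℂ, x ≠ 0 ∧ B.mulVec x ≠ 0 ∧
      (z = sgPoint (B.mulVec x) x ∨ z = (starRingEnd ℂ) (sgPoint (B.mulVec x) x))}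

theorem matrix_separation {m : ℕ} (A B : Matrix (Fin m) (Fin m) ℂ)
    (hsep : SG A ∩ SGdag B = ∅) :
    (1 - A * B).det ≠ 0 := by
  intro hdet
  obtain ⟨x, hx, hker⟩ := (Matrix.exists_mulVec_eq_zero_iff).2 hdet
  have hABx : (A * B).mulVec x = x := by
    have := hker
    rw [Matrix.sub_mulVec, Matrix.one_mulVec, sub_eq_zero] at this
    exact this.symm
  set y := B.mulVec x with hy
  have hAy : A.mulVec y = x := by
    rw [hy, Matrix.mulVec_mulVec, hABx]
  have hyne : y ≠ 0 := by
    intro h0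
    apply hx
    rw [← hAy, h0, Matrix.mulVec_zero]
  have hmem : sgPoint y x ∈ SG A ∩ SGdag B := by
    constructor
    · exact ⟨y, hyne, by rw [hAy]; exact hx, Or.inl (by rw [hAy])⟩
    · exact ⟨x, hx, by rw [← hy]; exact hyne, Or.inl rfl⟩
  rw [hsep] at hmem
  exact hmem
end

section
/- For A, B ∈ ℂ^{m×m}, if SG(A) ∩ SG†(B) = ∅, then 1 is not an eigenvalue of AB. -/
open Matrix Complex

theorem one_not_eigenvalue_of_sg_separation {m : ℕ} (A B : Matrix (Fin m) (Fin m) ℂ)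
    (hsep : SG A ∩ SGdag B = ∅) :
    ¬ ∃ x : Fin m → ℂ, x ≠ 0 ∧ (A * B).mulVec x = (1 : ℂ) • x := by
  rintro ⟨x, hx, hABx⟩
  rw [one_smul, ← Matrix.mulVec_mulVec] at hABx
  set y := B.mulVec x with hy
  have hyne : y ≠ 0 := by
    intro h
    apply hx
    rw [← hABx, h, Matrix.mulVec_zero]
  have hz : sgPoint y x ∈ SG A ∩ SGdag B := by
    constructor
    · exact ⟨y, hyne, by rw [hABx]; exact hx, Or.inl (by rw [hABx])⟩
    · exact ⟨x, hx, hyne, Or.inl rfl⟩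
  rw [hsep] at hz
  exact hz
end

section
/- For A, B ∈ ℂ^{m×m}, if SG(A) ∩ SG†(B) = ∅, then the 2m × 2m block matrix [[I, B], [A, I]] is invertible. -/
/-!
A nonzero kernel vector `(x, y)` of `[[I, B], [A, I]]` satisfies `Ax = -y` and `By = -x`, so
`x` and `y` are both nonzero. The pairs `(x, Ax) = (x, -y)` and `(By, y) = (-x, y)` then give the
same point of `SG(A)` and of `SG†(B)`, because gain and phase are unchanged when both arguments
are negated.
-/

open Matrix Complex

lemma enorm'_neg {m : ℕ} (x : Fin m → ℂ) : enorm' (-x) = enorm' x := by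
  simp [enorm']

lemma rinner_neg_neg {m : ℕ} (x y : Fin m → ℂ) : rinner (-x) (-y) = rinner x y := by
  simp [rinner]

lemma sgPoint_neg_neg {m : ℕ} (x y : Fin m → ℂ) : sgPoint (-x) (-y) = sgPoint x y := by
  simp only [sgPoint, gain, phase, enorm'_neg, rinner_neg_neg]

lemma fromBlocks_one_one_mulVec_sumElim_eq_zero_iff {l n R : Type*} [Fintype l] [Fintype n]
    [DecidableEq l] [DecidableEq n] [Ring R] (A : Matrix n l R) (B : Matrix l n R)
    (x : l → R) (y : n → R) :
    fromBlocks 1 B A 1 *ᵥ Sum.elim x y = 0 ↔ B *ᵥ y = -x ∧ A *ᵥ x = -y := by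
  rw [fromBlocks_mulVec, Sum.elim_comp_inl, Sum.elim_comp_inr, one_mulVec, one_mulVec,
    ← Sum.elim_zero_zero, Sum.elim_eq_iff, add_eq_zero_iff_eq_neg', add_eq_zero_iff_eq_neg]

lemma sgPoint_mem_SG_inter_SGdag {m : ℕ} {A B : Matrix (Fin m) (Fin m) ℂ} {x y : Fin m → ℂ}
    (hx : x ≠ 0) (hy : y ≠ 0) (hA : A *ᵥ x = -y) (hB : B *ᵥ y = -x) :
    sgPoint x (A *ᵥ x) ∈ SG A ∩ SGdag B := by
  refine ⟨⟨x, hx, by simpa [hA] using hy, Or.inl rfl⟩, ⟨y, hy, by simpa [hB] using hx, Or.inl ?_⟩⟩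
  rw [hA, hB, ← sgPoint_neg_neg, neg_neg]

theorem block_matrix_invertible_of_sg_separation {m : ℕ} (A B : Matrix (Fin m) (Fin m) ℂ)
    (hsep : SG A ∩ SGdag B = ∅) :
    IsUnit (Matrix.fromBlocks (1 : Matrix (Fin m) (Fin m) ℂ) B A 1) := by
  rw [isUnit_iff_isUnit_det, isUnit_iff_ne_zero]
  intro hdet
  obtain ⟨v, hv, hker⟩ := exists_mulVec_eq_zero_iff.2 hdet
  rw [← Sum.elim_comp_inl_inr v] at hker hv
  generalize v ∘ Sum.inl = x, v ∘ Sum.inr = y at hker hv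
  obtain ⟨hB, hA⟩ := (fromBlocks_one_one_mulVec_sumElim_eq_zero_iff A B x y).1 hker
  have hx : x ≠ 0 := by
    rintro rfl
    rw [mulVec_zero, zero_eq_neg] at hA
    exact hv (by rw [hA, Sum.elim_zero_zero])
  have hy : y ≠ 0 := by
    rintro rfl
    rw [mulVec_zero, zero_eq_neg] at hB
    exact hx hB
  exact (Set.eq_empty_iff_forall_notMem.1 hsep) _ (sgPoint_mem_SG_inter_SGdag hx hy hA hB)
end

section
/- If A ∈ ℂ^{m×m} satisfies A + A* ≥ 0 (positive semidefinite) and B ∈ ℂ^{m×m} satisfies B + B* < 0 (negative definite), then det(I − AB) ≠ 0. -/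
open Matrix Complex
open scoped ComplexOrder

/-!
If `det (1 - A B) = 0`, pick `v ≠ 0` with `v = A (B v)` and put `y = B v`. Strict dissipativity of
`B` gives `Re ⟪v, y⟫ < 0`, while passivity of `A` gives `0 ≤ Re ⟪y, A y⟫ = Re ⟪y, v⟫ = Re ⟪v, y⟫`.
-/

namespace Matrix

variable {n 𝕜 : Type*} [Fintype n] [RCLike 𝕜]

theorem star_dotProduct_add_conjTranspose_mulVec (A : Matrix n n 𝕜) (x : n → 𝕜) :
    star x ⬝ᵥ ((A + Aᴴ) *ᵥ x) = star x ⬝ᵥ (A *ᵥ x) + star (star x ⬝ᵥ (A *ᵥ x)) := by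
  rw [add_mulVec, dotProduct_add, dotProduct_mulVec _ Aᴴ, vecMul_conjTranspose, star_star,
    star_dotProduct (A *ᵥ x)]

theorem re_star_dotProduct_mulVec_nonneg {A : Matrix n n 𝕜} (hA : (A + Aᴴ).PosSemidef)
    (x : n → 𝕜) : 0 ≤ RCLike.re (star x ⬝ᵥ (A *ᵥ x)) := by
  have h := (RCLike.nonneg_iff.mp (hA.dotProduct_mulVec_nonneg x)).1
  rw [star_dotProduct_add_conjTranspose_mulVec, map_add, RCLike.star_def, RCLike.conj_re] at h
  linarith

theorem re_star_dotProduct_mulVec_neg {B : Matrix n n 𝕜} (hB : (-(B + Bᴴ)).PosDef)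
    {x : n → 𝕜} (hx : x ≠ 0) : RCLike.re (star x ⬝ᵥ (B *ᵥ x)) < 0 := by
  have h := (RCLike.pos_iff.mp (hB.dotProduct_mulVec_pos hx)).1
  rw [neg_mulVec, dotProduct_neg, star_dotProduct_add_conjTranspose_mulVec, map_neg, map_add,
    RCLike.star_def, RCLike.conj_re] at h
  linarith

end Matrix

theorem passivity_det_ne_zero {m : ℕ} (A B : Matrix (Fin m) (Fin m) ℂ)
    (hA : (A + Aᴴ).PosSemidef) (hB : (-(B + Bᴴ)).PosDef) :
    (1 - A * B).det ≠ 0 := by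
  intro hdet
  obtain ⟨v, hv, hfix⟩ := exists_mulVec_eq_zero_iff.mpr hdet
  rw [sub_mulVec, one_mulVec, sub_eq_zero, ← mulVec_mulVec] at hfix
  have hpassive := re_star_dotProduct_mulVec_nonneg hA (B *ᵥ v)
  rw [← hfix, star_dotProduct, RCLike.star_def, RCLike.conj_re] at hpassive
  exact (re_star_dotProduct_mulVec_neg hB hv).not_ge hpassive
end

section
/- If A + A* is positive semidefinite for A ∈ ℂ^{m×m}, then SG(A) is contained in the closed right half-plane { z ∈ ℂ : Re z ≥ 0 }. -/
open Matrix Complex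
open scoped ComplexOrder

/-
The phase of `(x, Ax)` is governed by the sign of `Re(x* A x)`, which is half of
`x* (A + A*) x ≥ 0`; so the phase lies in `[0, π/2]` and every point of `SG(A)` and its
conjugate has nonnegative real part `γ cos θ`.
-/

theorem Matrix.re_star_dotProduct_conjTranspose_mulVec {𝕜 n : Type*} [RCLike 𝕜] [Fintype n]
    (A : Matrix n n 𝕜) (x : n → 𝕜) :
    RCLike.re (star x ⬝ᵥ Aᴴ *ᵥ x) = RCLike.re (star x ⬝ᵥ A *ᵥ x) := by
  rw [mulVec_conjTranspose, star_dotProduct_star, dotProduct_mulVec, RCLike.star_def,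
    RCLike.conj_re]

theorem Matrix.PosSemidef.re_star_dotProduct_mulVec_nonneg_of_add_conjTranspose
    {𝕜 n : Type*} [RCLike 𝕜] [Fintype n] {A : Matrix n n 𝕜} (hA : (A + Aᴴ).PosSemidef)
    (x : n → 𝕜) : 0 ≤ RCLike.re (star x ⬝ᵥ A *ᵥ x) := by
  have h := hA.re_dotProduct_nonneg x
  rw [add_mulVec, dotProduct_add, map_add, re_star_dotProduct_conjTranspose_mulVec] at h
  linarith

theorem rinner_eq_re_star_dotProduct {m : ℕ} (x y : Fin m → ℂ) :
    rinner x y = (star x ⬝ᵥ y).re := by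
  simp only [rinner, dotProduct, Pi.star_apply, Complex.star_def]

theorem sgPoint_re {m : ℕ} (x y : Fin m → ℂ) :
    (sgPoint x y).re = gain x y * Real.cos (phase x y) := by
  simp [sgPoint, mul_comm Complex.I, Complex.exp_mul_I, Complex.cos_ofReal_re,
    Complex.sin_ofReal_im]

theorem cos_phase_nonneg {m : ℕ} {x y : Fin m → ℂ} (h : 0 ≤ rinner x y) :
    0 ≤ Real.cos (phase x y) := by
  have hquot : 0 ≤ rinner x y / (enorm' x * enorm' y) :=
    div_nonneg h (mul_nonneg (Real.sqrt_nonneg _) (Real.sqrt_nonneg _))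
  unfold phase
  exact Real.cos_nonneg_of_mem_Icc
    ⟨(neg_nonpos.2 Real.pi_div_two_pos.le).trans (Real.arccos_nonneg _),
      Real.arccos_le_pi_div_two.2 hquot⟩

theorem sgPoint_re_nonneg {m : ℕ} {x y : Fin m → ℂ} (h : 0 ≤ rinner x y) :
    0 ≤ (sgPoint x y).re := by
  rw [sgPoint_re]
  exact mul_nonneg (div_nonneg (Real.sqrt_nonneg _) (Real.sqrt_nonneg _)) (cos_phase_nonneg h)

theorem sg_subset_closed_rhp {m : ℕ} (A : Matrix (Fin m) (Fin m) ℂ)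
    (hA : (A + Aᴴ).PosSemidef) :
    SG A ⊆ {z : ℂ | 0 ≤ z.re} := by
  rintro z ⟨x, -, -, hz⟩
  have hre : 0 ≤ (sgPoint x (A *ᵥ x)).re := by
    apply sgPoint_re_nonneg
    rw [rinner_eq_re_star_dotProduct]
    exact hA.re_star_dotProduct_mulVec_nonneg_of_add_conjTranspose x
  rcases hz with rfl | rfl
  · exact hre
  · simpa using hre
end

section
/- If A + A* is positive definite for A ∈ ℂ^{m×m}, then SG(A) ⊂ { z ∈ ℂ : Re z > 0 }, the open right half-plane. -/
/-! Since 2 Re(x* A x) = x* (A + A*) x > 0 for x ≠ 0, the phase θ(x, Ax) lies in [0, π/2), so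
cos θ > 0, and the real part of γ e^{±iθ} is γ cos θ > 0. -/

open Matrix Complex
open scoped ComplexOrder

section ScaledGraph

variable {m : ℕ}

lemma enorm'_pos {x : Fin m → ℂ} (hx : x ≠ 0) : 0 < enorm' x := by
  obtain ⟨i, hi⟩ := Function.ne_iff.mp hx
  exact Real.sqrt_pos.mpr <| Finset.sum_pos' (fun j _ => Complex.normSq_nonneg _)
    ⟨i, Finset.mem_univ i, Complex.normSq_pos.mpr hi⟩

lemma rinner_eq_re_dotProduct (x y : Fin m → ℂ) : rinner x y = (star x ⬝ᵥ y).re := rfl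

lemma re_dotProduct_add_conjTranspose_mulVec {n : Type*} [Fintype n] (A : Matrix n n ℂ)
    (x : n → ℂ) :
    (star x ⬝ᵥ (A + Aᴴ) *ᵥ x).re = 2 * (star x ⬝ᵥ A *ᵥ x).re := by
  have hstar : star (star x ⬝ᵥ A *ᵥ x) = star x ⬝ᵥ Aᴴ *ᵥ x := by
    rw [star_dotProduct, star_star, Matrix.star_mulVec, Matrix.dotProduct_mulVec]
  rw [Matrix.add_mulVec, dotProduct_add, ← hstar, Complex.add_re, Complex.star_def,
    Complex.conj_re, two_mul]

lemma rinner_mulVec_pos_of_posDef {A : Matrix (Fin m) (Fin m) ℂ} (hA : (A + Aᴴ).PosDef)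
    {x : Fin m → ℂ} (hx : x ≠ 0) : 0 < rinner x (A *ᵥ x) := by
  have h := (Complex.lt_def.mp (hA.dotProduct_mulVec_pos hx)).1
  rw [Complex.zero_re, re_dotProduct_add_conjTranspose_mulVec] at h
  rw [rinner_eq_re_dotProduct]
  linarith

lemma re_sgPoint (x y : Fin m → ℂ) : (sgPoint x y).re = gain x y * Real.cos (phase x y) := by
  rw [sgPoint, mul_comm Complex.I, Complex.re_ofReal_mul, Complex.exp_ofReal_mul_I_re]

lemma cos_phase_pos {x y : Fin m → ℂ} (hx : x ≠ 0) (hy : y ≠ 0) (h : 0 < rinner x y) :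
    0 < Real.cos (phase x y) := by
  have hθ : phase x y < Real.pi / 2 :=
    Real.arccos_lt_pi_div_two.mpr (div_pos h (mul_pos (enorm'_pos hx) (enorm'_pos hy)))
  have hθ₀ : 0 ≤ phase x y := Real.arccos_nonneg _
  exact Real.cos_pos_of_mem_Ioo ⟨by linarith [Real.pi_pos], hθ⟩

lemma re_sgPoint_pos {x y : Fin m → ℂ} (hx : x ≠ 0) (hy : y ≠ 0) (h : 0 < rinner x y) :
    0 < (sgPoint x y).re := by
  rw [re_sgPoint]
  exact mul_pos (div_pos (enorm'_pos hy) (enorm'_pos hx)) (cos_phase_pos hx hy h)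

end ScaledGraph

theorem sg_subset_open_rhp {m : ℕ} (A : Matrix (Fin m) (Fin m) ℂ)
    (hA : (A + Aᴴ).PosDef) :
    SG A ⊆ {z : ℂ | 0 < z.re} := by
  rintro z ⟨x, hx, hAx, hz⟩
  have hre := re_sgPoint_pos hx hAx (rinner_mulVec_pos_of_posDef hA hx)
  rcases hz with rfl | rfl
  · exact hre
  · rwa [Set.mem_ofPred_eq, Complex.conj_re]
end

section
/- Let A, B ∈ ℂ^{m×m}, and suppose the nonzero vectors u₁, u₂ ∈ ℂ^m satisfy u₁ = −B u₂ and u₂ = −A u₁ with A u₁ ≠ 0 and B u₂ ≠ 0. Then the scaled-graph point of A generated by u₁ equals the inverse-scaled-graph point of B generated by u₂: γ(u₁, Au₁)·e^{iθ(u₁, Au₁)} = γ(Bu₂, u₂)·e^{iθ(Bu₂, u₂)}. In particular SG(A) ∩ SG†(B) ≠ ∅. -/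
open Matrix Complex

theorem feedback_loop_sg_intersection {m : ℕ} (A B : Matrix (Fin m) (Fin m) ℂ)
    (u₁ u₂ : Fin m → ℂ) (hu₁ : u₁ ≠ 0) (hu₂ : u₂ ≠ 0)
    (h1 : u₁ = -(B.mulVec u₂)) (h2 : u₂ = -(A.mulVec u₁))
    (hAu : A.mulVec u₁ ≠ 0) (hBu : B.mulVec u₂ ≠ 0) :
    sgPoint u₁ (A.mulVec u₁) = sgPoint (B.mulVec u₂) u₂ ∧
    (SG A ∩ SGdag B).Nonempty := by
  have hA : A.mulVec u₁ = -u₂ := by rw [h2]; simp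
  have hB : B.mulVec u₂ = -u₁ := by rw [h1]; simp
  have key : sgPoint u₁ (A.mulVec u₁) = sgPoint (B.mulVec u₂) u₂ := by
    rw [hA, hB]
    have hen : ∀ x : Fin m → ℂ, enorm' (-x) = enorm' x := by
      intro x; unfold enorm'; simp
    have hr1 : rinner u₁ (-u₂) = -rinner u₁ u₂ := by
      unfold rinner; simp [← Finset.sum_neg_distrib]
    have hr2 : rinner (-u₁) u₂ = -rinner u₁ u₂ := by
      unfold rinner; simp [← Finset.sum_neg_distrib]
    unfold sgPoint gain phase
    rw [hen, hen, hr1, hr2]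
  refine ⟨key, sgPoint u₁ (A.mulVec u₁), ⟨u₁, hu₁, hAu, Or.inl rfl⟩, ⟨u₂, hu₂, hBu, Or.inl key⟩⟩
end
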